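/- (Theorem 4, player C, case ω = 1.) The families (P_C(m, k·i₀))_{m ∈ ℕ} are summable for every k ≥ 0, and the absorption probabilities of player C satisfy: P_C(0) := ∑'_{m} P_C(m, 0) = 1/(2 − φ₂), and for every integer k ≥ 2, P_C(k·i₀) := s·∑'_{m} P_C(m, k·i₀) = 2·i₀·s·φ₂^{k−1}/((1 − s)(2 − φ₂)). -/

import Mathlib

/-!
Let `u j = ∑ₘ P_C(m, j)` be the expected number of visits to `j`. The walk only loses mass, so the
mass killed at any one site over all time is at most `1`: hence `∑ₘ P_C(m, 0) ≤ 1` and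
`s · u (k i₀) ≤ 1`, and finiteness spreads to every site since `P_C(m + 1, j)` dominates a positive
multiple of `P_C(m, j + 1)`.

Summing the recursion over `m`, `W = c_C · u` satisfies `W 0 = 0` and
`2 W (j + 1) = 2 [j + 1 = i₀] + c_C (j + 1) (W j + W (j + 2))`. So does the function that is linear
between consecutive multiples of `i₀` and equals `2 i₀ φ₂^(k-1) / (2 - φ₂)` at `k i₀`: the jump
condition at a barrier is exactly `φ₂² - θ φ₂ + 1 = 0`. Their difference is bounded along the
barriers, while a solution of the homogeneous equation with positive slope at `0` grows linearly;
so they agree, and `u 0 = W 1 / 2`, `u (k i₀) = W (k i₀) / (1 - s)` give the formulas.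
-/

/-- Player C's survival factor: 0 at the absorbing state 0, `1 - s` at the
multiple function barriers `k·i₀` with `k ≥ 2`, and 1 elsewhere (in particular
`cC s i₀ i₀ = 1`). -/
noncomputable def cC (s : ℝ) (i₀ : ℕ) (i : ℕ) : ℝ :=
  if i = 0 then 0 else if i₀ ∣ i ∧ i ≠ i₀ then 1 - s else 1

/-- Player C's arrival probabilities: `PC p s i₀ m j` is the probability that
player C, starting at `i₀`, is at state `j` after `m` steps without absorption. -/
noncomputable def PC (p s : ℝ) (i₀ : ℕ) : ℕ → ℕ → ℝ
  | 0, j => if j = i₀ then 1 else 0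
  | m + 1, 0 => (1 - p) * cC s i₀ 1 * PC p s i₀ m 1
  | m + 1, j + 1 =>
      p * cC s i₀ j * PC p s i₀ m j + (1 - p) * cC s i₀ (j + 2) * PC p s i₀ m (j + 2)


open Finset Filter

section survival

variable {s : ℝ} {i₀ : ℕ}

lemma cC_zero : cC s i₀ 0 = 0 := by simp [cC]

lemma cC_one : cC s i₀ 1 = 1 := by
  simp only [cC, one_ne_zero, if_false, Nat.dvd_one]
  rw [if_neg (fun h => h.2 h.1.symm)]

lemma cC_self (hi₀ : i₀ ≠ 0) : cC s i₀ i₀ = 1 := by simp [cC, hi₀]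

lemma cC_of_not_dvd {j : ℕ} (h : ¬ i₀ ∣ j) : cC s i₀ j = 1 := by
  have hj : j ≠ 0 := by rintro rfl; exact h (dvd_zero i₀)
  simp [cC, hj, h]

lemma cC_mul_self {k : ℕ} (hk : 2 ≤ k) (hi₀ : i₀ ≠ 0) : cC s i₀ (k * i₀) = 1 - s := by
  have hne : k * i₀ ≠ i₀ := fun h => by
    have := Nat.eq_of_mul_eq_mul_right (Nat.pos_of_ne_zero hi₀) (h.trans (one_mul i₀).symm)
    omega
  simp [cC, hi₀, hne, show k ≠ 0 by omega]

lemma cC_nonneg (hs1 : s ≤ 1) (j : ℕ) : 0 ≤ cC s i₀ j := by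
  unfold cC; split_ifs <;> linarith

lemma cC_le_one (hs : 0 ≤ s) (j : ℕ) : cC s i₀ j ≤ 1 := by
  unfold cC; split_ifs <;> linarith

lemma cC_pos (hs1 : s < 1) {j : ℕ} (hj : j ≠ 0) : 0 < cC s i₀ j := by
  unfold cC; rw [if_neg hj]; split_ifs <;> linarith

end survival

section walk

variable {p s : ℝ} {i₀ : ℕ}

lemma PC_nonneg (hp0 : 0 ≤ p) (hp1 : p ≤ 1) (hs1 : s ≤ 1) (m j : ℕ) : 0 ≤ PC p s i₀ m j := by
  induction m generalizing j with
  | zero => unfold PC; split_ifs <;> norm_num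
  | succ m ih =>
    have hq : 0 ≤ 1 - p := by linarith
    rcases j with _ | j
    · rw [PC]; exact mul_nonneg (mul_nonneg hq (cC_nonneg hs1 1)) (ih 1)
    · rw [PC]
      exact add_nonneg (mul_nonneg (mul_nonneg hp0 (cC_nonneg hs1 j)) (ih j))
        (mul_nonneg (mul_nonneg hq (cC_nonneg hs1 _)) (ih _))

lemma one_sub_mul_cC_mul_PC_le (hp0 : 0 ≤ p) (hp1 : p ≤ 1) (hs1 : s ≤ 1) (m j : ℕ) :
    (1 - p) * cC s i₀ (j + 1) * PC p s i₀ m (j + 1) ≤ PC p s i₀ (m + 1) j := by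
  rcases j with _ | j
  · rw [PC]
  · rw [PC]
    exact le_add_of_nonneg_left
      (mul_nonneg (mul_nonneg hp0 (cC_nonneg hs1 j)) (PC_nonneg hp0 hp1 hs1 m j))

lemma sum_range_PC_succ (m N : ℕ) :
    ∑ j ∈ range (N + 1), PC p s i₀ (m + 1) j =
      p * ∑ j ∈ range N, cC s i₀ j * PC p s i₀ m j +
        (1 - p) * ∑ j ∈ range (N + 2), cC s i₀ j * PC p s i₀ m j := by
  rw [sum_range_succ', sum_range_succ' _ (N + 1), sum_range_succ' _ N]
  simp only [PC, cC_zero, zero_mul, mul_assoc, sum_add_distrib, ← mul_sum]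
  ring

lemma sum_range_PC_succ_add_le (hp0 : 0 ≤ p) (hp1 : p ≤ 1) (hs : 0 ≤ s) (hs1 : s ≤ 1)
    {j₀ : ℕ} (m N : ℕ) (hj₀ : j₀ < N + 2) :
    ∑ j ∈ range (N + 1), PC p s i₀ (m + 1) j + (1 - cC s i₀ j₀) * PC p s i₀ m j₀ ≤
      ∑ j ∈ range (N + 2), PC p s i₀ m j := by
  have hP := PC_nonneg (i₀ := i₀) hp0 hp1 hs1 m
  have hcP : ∀ j, 0 ≤ cC s i₀ j * PC p s i₀ m j := fun j => mul_nonneg (cC_nonneg hs1 j) (hP j)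
  have hkill : ∀ j, 0 ≤ (1 - cC s i₀ j) * PC p s i₀ m j :=
    fun j => mul_nonneg (by linarith [cC_le_one (i₀ := i₀) hs j]) (hP j)
  have hshort : ∑ j ∈ range N, cC s i₀ j * PC p s i₀ m j ≤
      ∑ j ∈ range (N + 2), cC s i₀ j * PC p s i₀ m j :=
    sum_le_sum_of_subset_of_nonneg (range_subset_range.2 (by omega)) fun j _ _ => hcP j
  have hsingle : (1 - cC s i₀ j₀) * PC p s i₀ m j₀ ≤
      ∑ j ∈ range (N + 2), (1 - cC s i₀ j) * PC p s i₀ m j :=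
    single_le_sum (fun j _ => hkill j) (mem_range.2 hj₀)
  have hsplit : ∑ j ∈ range (N + 2), PC p s i₀ m j =
      ∑ j ∈ range (N + 2), cC s i₀ j * PC p s i₀ m j +
        ∑ j ∈ range (N + 2), (1 - cC s i₀ j) * PC p s i₀ m j := by
    rw [← sum_add_distrib]; exact sum_congr rfl fun j _ => by ring
  rw [sum_range_PC_succ, hsplit]
  nlinarith

lemma sum_range_PC_zero_le (N : ℕ) : ∑ j ∈ range N, PC p s i₀ 0 j ≤ 1 := by
  simp only [PC, sum_ite_eq', mem_range]
  split_ifs <;> norm_num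

/-- The window shrinks by one site per step, so no mass enters it from outside. -/
lemma one_sub_cC_mul_sum_add_le (hp0 : 0 ≤ p) (hp1 : p ≤ 1) (hs : 0 ≤ s) (hs1 : s ≤ 1)
    {j₀ : ℕ} (M N : ℕ) (hj₀ : j₀ < N + 1) :
    (1 - cC s i₀ j₀) * ∑ m ∈ range M, PC p s i₀ m j₀ + ∑ j ∈ range (N + 1), PC p s i₀ M j ≤ 1 := by
  induction M generalizing N with
  | zero => simpa using sum_range_PC_zero_le (N + 1)
  | succ M ih =>
    have hstep := sum_range_PC_succ_add_le (i₀ := i₀) hp0 hp1 hs hs1 M N (by omega : j₀ < N + 2)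
    have := ih (N + 1) (by omega)
    rw [sum_range_succ]
    linarith

lemma one_sub_cC_mul_sum_range_PC_le (hp0 : 0 ≤ p) (hp1 : p ≤ 1) (hs : 0 ≤ s) (hs1 : s ≤ 1)
    (j M : ℕ) : (1 - cC s i₀ j) * ∑ m ∈ range M, PC p s i₀ m j ≤ 1 := by
  have := one_sub_cC_mul_sum_add_le (i₀ := i₀) hp0 hp1 hs hs1 M j (Nat.lt_succ_self j)
  have : 0 ≤ ∑ j ∈ range (j + 1), PC p s i₀ M j :=
    sum_nonneg fun j _ => PC_nonneg hp0 hp1 hs1 M j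
  linarith

lemma summable_PC (hp0 : 0 ≤ p) (hp1 : p < 1) (hs : 0 ≤ s) (hs1 : s < 1) (j : ℕ) :
    Summable fun m => PC p s i₀ m j := by
  induction j with
  | zero =>
    refine summable_of_sum_range_le (c := 1) (fun m => PC_nonneg hp0 hp1.le hs1.le m 0) fun M => ?_
    simpa [cC_zero] using one_sub_cC_mul_sum_range_PC_le (i₀ := i₀) hp0 hp1.le hs hs1.le 0 M
  | succ j ih =>
    have hK : 0 < (1 - p) * cC s i₀ (j + 1) := mul_pos (by linarith) (cC_pos hs1 j.succ_ne_zero)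
    refine (((summable_nat_add_iff 1).2 ih).div_const ((1 - p) * cC s i₀ (j + 1))).of_nonneg_of_le
      (fun m => PC_nonneg hp0 hp1.le hs1.le m _) fun m => ?_
    rw [le_div_iff₀ hK, mul_comm]
    exact one_sub_mul_cC_mul_PC_le hp0 hp1.le hs1.le m j

end walk

noncomputable def occupation (p s : ℝ) (i₀ : ℕ) (j : ℕ) : ℝ := ∑' m, PC p s i₀ m j

section occupation

variable {p s : ℝ} {i₀ : ℕ}

lemma occupation_nonneg (hp0 : 0 ≤ p) (hp1 : p ≤ 1) (hs1 : s ≤ 1) (j : ℕ) :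
    0 ≤ occupation p s i₀ j :=
  tsum_nonneg fun m => PC_nonneg hp0 hp1 hs1 m j

lemma one_sub_cC_mul_occupation_le (hp0 : 0 ≤ p) (hp1 : p ≤ 1) (hs : 0 ≤ s) (hs1 : s ≤ 1)
    (j : ℕ) : (1 - cC s i₀ j) * occupation p s i₀ j ≤ 1 := by
  rw [occupation, ← tsum_mul_left]
  refine Real.tsum_le_of_sum_range_le (fun m => ?_) fun M => ?_
  · exact mul_nonneg (by linarith [cC_le_one (i₀ := i₀) hs j]) (PC_nonneg hp0 hp1 hs1 m j)
  · rw [← mul_sum]; exact one_sub_cC_mul_sum_range_PC_le hp0 hp1 hs hs1 j M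

lemma occupation_mul_le (hp0 : 0 ≤ p) (hp1 : p ≤ 1) (hs : 0 < s) (hs1 : s ≤ 1) (hi₀ : i₀ ≠ 0)
    {k : ℕ} (hk : 2 ≤ k) : occupation p s i₀ (k * i₀) ≤ 1 / s := by
  have := one_sub_cC_mul_occupation_le (i₀ := i₀) hp0 hp1 hs.le hs1 (k * i₀)
  rw [cC_mul_self hk hi₀, sub_sub_cancel] at this
  rwa [le_div_iff₀ hs, mul_comm]

lemma occupation_zero (hi₀ : i₀ ≠ 0) (hsum : ∀ j, Summable fun m => PC p s i₀ m j) :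
    occupation p s i₀ 0 = (1 - p) * occupation p s i₀ 1 := by
  rw [occupation, (hsum 0).tsum_eq_zero_add]
  simp only [PC, cC_one, mul_one, Ne.symm hi₀, if_false, zero_add]
  rw [tsum_mul_left, occupation]

lemma occupation_succ (hsum : ∀ j, Summable fun m => PC p s i₀ m j) (j : ℕ) :
    occupation p s i₀ (j + 1) = (if j + 1 = i₀ then 1 else 0) + p * cC s i₀ j * occupation p s i₀ j +
      (1 - p) * cC s i₀ (j + 2) * occupation p s i₀ (j + 2) := by
  rw [occupation, (hsum (j + 1)).tsum_eq_zero_add]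
  simp only [PC]
  rw [((hsum j).mul_left _).tsum_add ((hsum (j + 2)).mul_left _), tsum_mul_left, tsum_mul_left,
    occupation, occupation, add_assoc]

end occupation

noncomputable def linInterp (n : ℕ) (v : ℕ → ℝ) (j : ℕ) : ℝ :=
  (((n : ℝ) - (j % n : ℕ)) * v (j / n) + (j % n : ℕ) * v (j / n + 1)) / n

section interpolation

variable {n : ℕ} {v : ℕ → ℝ}

lemma linInterp_mul_add (hn : 0 < n) (q : ℕ) {r : ℕ} (hr : r ≤ n) :
    linInterp n v (q * n + r) = ((n - r) * v q + r * v (q + 1)) / n := by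
  rcases hr.lt_or_eq with hr | hr
  · have hdiv : (q * n + r) / n = q := by
      rw [Nat.add_comm, Nat.add_mul_div_right _ _ hn, Nat.div_eq_of_lt hr, zero_add]
    have hmod : (q * n + r) % n = r := by
      rw [Nat.add_comm, Nat.add_mul_mod_self_right, Nat.mod_eq_of_lt hr]
    rw [linInterp, hdiv, hmod]
  · rw [hr]
    have hdiv : (q * n + n) / n = q + 1 := by
      rw [← Nat.succ_mul, Nat.mul_div_cancel _ hn]
    have hmod : (q * n + n) % n = 0 := by
      rw [← Nat.succ_mul, Nat.mul_mod_left]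
    have hn' : (n : ℝ) ≠ 0 := by positivity
    rw [linInterp, hdiv, hmod]
    field_simp
    ring

lemma linInterp_mul (hn : 0 < n) (k : ℕ) : linInterp n v (k * n) = v k := by
  have hn' : (n : ℝ) ≠ 0 := by positivity
  have := linInterp_mul_add (v := v) hn k (Nat.zero_le n)
  rw [add_zero] at this
  rw [this]
  field_simp
  ring

lemma linInterp_add_two (hn : 0 < n) (q : ℕ) {r : ℕ} (hr : r + 2 ≤ n) :
    linInterp n v (q * n + r) + linInterp n v (q * n + (r + 2)) =
      2 * linInterp n v (q * n + (r + 1)) := by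
  rw [linInterp_mul_add hn q (by omega), linInterp_mul_add hn q hr,
    linInterp_mul_add hn q (by omega)]
  push_cast
  ring

lemma linInterp_around_mul (hn : 0 < n) (q : ℕ) :
    linInterp n v (q * n + (n - 1)) + linInterp n v ((q + 1) * n + 1) =
      (v q + v (q + 2)) / n + 2 * (1 - 1 / n) * v (q + 1) := by
  have hn' : (n : ℝ) ≠ 0 := by positivity
  rw [linInterp_mul_add hn q (Nat.sub_le n 1), linInterp_mul_add hn (q + 1) (by omega),
    Nat.cast_sub (by omega)]
  field_simp
  ring

end interpolation

noncomputable def barrierNode (i₀ : ℕ) (φ : ℝ) : ℕ → ℝ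
  | 0 => 0
  | k + 1 => 2 * i₀ * φ ^ k / (2 - φ)

noncomputable def barrierProfile (i₀ : ℕ) (φ : ℝ) : ℕ → ℝ := linInterp i₀ (barrierNode i₀ φ)

section profile

variable {s φ : ℝ} {i₀ : ℕ}

lemma barrierProfile_zero (hi₀ : 0 < i₀) : barrierProfile i₀ φ 0 = 0 := by
  simpa [barrierProfile, barrierNode] using linInterp_mul (v := barrierNode i₀ φ) hi₀ 0

lemma barrierProfile_one (hi₀ : 0 < i₀) : barrierProfile i₀ φ 1 = 2 / (2 - φ) := by
  have hi₀' : (i₀ : ℝ) ≠ 0 := by positivity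
  have := linInterp_mul_add (v := barrierNode i₀ φ) hi₀ 0 hi₀
  simp only [zero_mul, zero_add] at this
  rw [barrierProfile, this, barrierNode, barrierNode]
  field_simp
  norm_num

lemma barrierProfile_succ_mul (hi₀ : 0 < i₀) (k : ℕ) :
    barrierProfile i₀ φ ((k + 1) * i₀) = 2 * i₀ * φ ^ k / (2 - φ) :=
  linInterp_mul hi₀ (k + 1)

lemma barrierProfile_succ_mul_mem_Icc (hi₀ : 0 < i₀) (hφ0 : 0 ≤ φ) (hφ1 : φ ≤ 1) (k : ℕ) :
    barrierProfile i₀ φ ((k + 1) * i₀) ∈ Set.Icc 0 (2 * i₀ / (2 - φ)) := by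
  have h2φ : 0 < 2 - φ := by linarith
  rw [barrierProfile_succ_mul hi₀]
  exact ⟨by positivity, div_le_div_of_nonneg_right
    (mul_le_of_le_one_right (by positivity) (pow_le_one₀ hφ0 hφ1)) h2φ.le⟩

/-- The equation satisfied by `cC · occupation`; at the barriers it reduces to `hroot`. -/
lemma barrierProfile_succ (hi₀ : 0 < i₀) (hφ : φ ≠ 2)
    (hroot : (1 - s) * (φ ^ 2 + 2 * (i₀ - 1) * φ + 1) = 2 * i₀ * φ) (j : ℕ) :
    2 * barrierProfile i₀ φ (j + 1) = 2 * (if j + 1 = i₀ then 1 else 0) +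
      cC s i₀ (j + 1) * (barrierProfile i₀ φ j + barrierProfile i₀ φ (j + 2)) := by
  have h2φ : 2 - φ ≠ 0 := sub_ne_zero.2 (Ne.symm hφ)
  have hi₀' : (i₀ : ℝ) ≠ 0 := by positivity
  obtain ⟨q, r, hr, hj⟩ : ∃ q r, r < i₀ ∧ j + 1 = q * i₀ + r :=
    ⟨(j + 1) / i₀, (j + 1) % i₀, Nat.mod_lt _ hi₀, by rw [Nat.mul_comm, Nat.div_add_mod]⟩
  rcases Nat.eq_zero_or_pos r with rfl | hr0
  · obtain ⟨k, rfl⟩ : ∃ k, q = k + 1 := Nat.exists_eq_succ_of_ne_zero (by rintro rfl; omega)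
    have hj' : j = k * i₀ + (i₀ - 1) := by rw [add_mul, one_mul] at hj; omega
    have hj2 : j + 2 = (k + 1) * i₀ + 1 := by omega
    rw [add_zero] at hj
    have hnode := linInterp_around_mul (v := barrierNode i₀ φ) hi₀ k
    unfold barrierProfile
    rw [hj2, hj, hj', hnode, linInterp_mul hi₀]
    rcases k with _ | l
    · simp only [zero_add, one_mul, ↓reduceIte, cC_self hi₀.ne', barrierNode]
      field_simp
      ring
    · rw [cC_mul_self (by omega) hi₀.ne', if_neg (by nlinarith)]
      simp only [barrierNode]
      field_simp
      linear_combination (-φ ^ l) * hroot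
  · have hnd : ¬ i₀ ∣ j + 1 := by
      rw [hj, Nat.dvd_add_right (dvd_mul_left i₀ q)]
      exact Nat.not_dvd_of_pos_of_lt hr0 hr
    have hne : j + 1 ≠ i₀ := fun h => hnd (h ▸ dvd_refl i₀)
    have hj' : j = q * i₀ + (r - 1) := by omega
    have hj1 : j + 1 = q * i₀ + (r - 1 + 1) := by omega
    have hj2 : j + 2 = q * i₀ + (r - 1 + 2) := by omega
    rw [cC_of_not_dvd hnd, if_neg hne, one_mul, mul_zero, zero_add]
    unfold barrierProfile
    rw [hj2, hj1, hj', linInterp_add_two hi₀ q (by omega)]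

end profile

section uniqueness

variable {κ D : ℕ → ℝ} {M : ℝ}

/-- With `0 < κ ≤ 1`, a solution that starts with a positive slope is convex while positive,
so it grows at least linearly. -/
lemma nonpos_of_frequently_le (hκ0 : ∀ j, 0 < κ j) (hκ1 : ∀ j, κ j ≤ 1) (h0 : D 0 = 0)
    (hrec : ∀ j, 2 * D (j + 1) = κ j * (D j + D (j + 2))) (hM : ∃ᶠ n in atTop, D n ≤ M) :
    D 1 ≤ 0 := by
  by_contra! h1
  have hstep : ∀ n, 0 ≤ D n ∧ D n + D 1 ≤ D (n + 1) := by
    intro n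
    induction n with
    | zero => simp [h0]
    | succ n ih =>
      have hpos : 0 ≤ D (n + 1) := by linarith [ih.1, ih.2]
      have hconv : 2 * D (n + 1) ≤ D n + D (n + 2) := by
        have := hrec n
        nlinarith [hκ0 n, hκ1 n]
      exact ⟨hpos, by linarith [ih.2]⟩
  have hgrowth : ∀ n : ℕ, n * D 1 ≤ D n := by
    intro n
    induction n with
    | zero => simp [h0]
    | succ n ih => push_cast; linarith [(hstep n).2]
  obtain ⟨N, hN⟩ := exists_nat_gt (M / D 1)
  obtain ⟨n, hn, hDn⟩ := frequently_atTop.1 hM N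
  have hNn : (N : ℝ) ≤ n := by exact_mod_cast hn
  rw [div_lt_iff₀ h1] at hN
  nlinarith [hgrowth n]

lemma eq_zero_of_frequently_abs_le (hκ0 : ∀ j, 0 < κ j) (hκ1 : ∀ j, κ j ≤ 1) (h0 : D 0 = 0)
    (hrec : ∀ j, 2 * D (j + 1) = κ j * (D j + D (j + 2))) (hM : ∃ᶠ n in atTop, |D n| ≤ M)
    (n : ℕ) : D n = 0 := by
  have hle := nonpos_of_frequently_le hκ0 hκ1 h0 hrec (hM.mono fun n h => (abs_le.1 h).2)
  have hge := nonpos_of_frequently_le (D := -D) hκ0 hκ1 (by simp [h0])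
    (fun j => by simp only [Pi.neg_apply]; linear_combination -(hrec j))
    (hM.mono fun n h => by simp only [Pi.neg_apply]; linarith [(abs_le.1 h).1])
  have hpair : ∀ n, D n = 0 ∧ D (n + 1) = 0 := by
    intro n
    induction n with
    | zero => exact ⟨h0, by simp only [Pi.neg_apply] at hge; linarith⟩
    | succ n ih =>
      have := hrec n
      rw [ih.1, ih.2, mul_zero, zero_add] at this
      exact ⟨ih.2, (mul_eq_zero.1 this.symm).resolve_left (hκ0 n).ne'⟩
  exact (hpair n).1

end uniqueness

lemma smaller_root_mem_Ioo {θ φ : ℝ} (hθ : 2 < θ) (hφ : φ = (θ - √(θ ^ 2 - 4)) / 2) :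
    0 < φ ∧ φ < 1 ∧ φ ^ 2 - θ * φ + 1 = 0 := by
  have hsq := Real.sq_sqrt (by nlinarith : (0 : ℝ) ≤ θ ^ 2 - 4)
  have hnn := Real.sqrt_nonneg (θ ^ 2 - 4)
  subst hφ
  refine ⟨?_, ?_, ?_⟩
  · nlinarith
  · nlinarith
  · linear_combination (1 / 4 : ℝ) * hsq

lemma barrier_condition_of_root {s θ φ : ℝ} {i₀ : ℕ} (h1s : 1 - s ≠ 0)
    (hθ : θ = 2 * ((i₀ : ℝ) / (1 - s) + 1 - i₀)) (hφ : φ ^ 2 - θ * φ + 1 = 0) :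
    (1 - s) * (φ ^ 2 + 2 * (i₀ - 1) * φ + 1) = 2 * i₀ * φ := by
  rw [hθ] at hφ
  field_simp at hφ
  linear_combination hφ

theorem cC_mul_occupation_eq_barrierProfile {s φ : ℝ} {i₀ : ℕ} (hs : 0 < s) (hs1 : s < 1)
    (hi₀ : 0 < i₀) (hφ0 : 0 ≤ φ) (hφ1 : φ ≤ 1)
    (hroot : (1 - s) * (φ ^ 2 + 2 * (i₀ - 1) * φ + 1) = 2 * i₀ * φ) (j : ℕ) :
    cC s i₀ j * occupation (1 / 2) s i₀ j = barrierProfile i₀ φ j := by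
  have hsum := summable_PC (p := 1 / 2) (i₀ := i₀) (by norm_num) (by norm_num) hs.le hs1
  set u := occupation (1 / 2) s i₀
  suffices ∀ n, cC s i₀ n * u n - barrierProfile i₀ φ n = 0 from sub_eq_zero.1 (this j)
  refine eq_zero_of_frequently_abs_le (κ := fun j => cC s i₀ (j + 1))
    (M := 1 / s + 2 * i₀ / (2 - φ)) (fun j => cC_pos hs1 j.succ_ne_zero)
    (fun j => cC_le_one hs.le _) (by simp [cC_zero, barrierProfile_zero hi₀]) (fun j => ?_) ?_
  · have hu := occupation_succ hsum j
    have hW := barrierProfile_succ (s := s) hi₀ (by linarith) hroot j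
    have hδ : cC s i₀ (j + 1) * (if j + 1 = i₀ then 1 else 0) = if j + 1 = i₀ then 1 else 0 := by
      split_ifs with h
      · rw [h, cC_self hi₀.ne', one_mul]
      · rw [mul_zero]
    linear_combination (2 * cC s i₀ (j + 1)) * hu - hW + 2 * hδ
  · -- Bounded along the barriers `(N + 2) i₀`, where `s u ≤ 1`.
    refine frequently_atTop.2 fun N => ⟨(N + 1 + 1) * i₀, by nlinarith, ?_⟩
    have hu := occupation_mul_le (p := 1 / 2) (by norm_num) (by norm_num) hs hs1.le hi₀.ne'
      (by omega : 2 ≤ N + 1 + 1)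
    have hu0 := occupation_nonneg (p := 1 / 2) (i₀ := i₀) (by norm_num) (by norm_num) hs1.le
      ((N + 1 + 1) * i₀)
    obtain ⟨hW0, hW1⟩ := barrierProfile_succ_mul_mem_Icc hi₀ hφ0 hφ1 (N + 1)
    rw [cC_mul_self (by omega) hi₀.ne', abs_sub_le_iff]
    constructor <;> nlinarith

/-- Theorem 4 of the paper, player C, case `ω = 1` (i.e. `p = q = 1/2`):
absorption probabilities. -/
theorem theorem4_playerC_omega_eq_one (s : ℝ) (i₀ : ℕ)
    (hs : 0 < s) (hs1 : s < 1) (hi₀ : 2 ≤ i₀)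
    (θ φ₂ : ℝ)
    (hθ : θ = 2 * ((i₀ : ℝ) / (1 - s) + 1 - (i₀ : ℝ)))
    (hφ₂ : φ₂ = (θ - Real.sqrt (θ ^ 2 - 4)) / 2) :
    (∀ k : ℕ, Summable (fun m : ℕ => PC (1 / 2) s i₀ m (k * i₀))) ∧
    (∑' m : ℕ, PC (1 / 2) s i₀ m 0) = 1 / (2 - φ₂) ∧
    ∀ k : ℕ, 2 ≤ k →
      s * (∑' m : ℕ, PC (1 / 2) s i₀ m (k * i₀)) =
        2 * (i₀ : ℝ) * s * φ₂ ^ (k - 1) / ((1 - s) * (2 - φ₂)) := by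
  have hi₀' : 0 < i₀ := by omega
  have h1s : 0 < 1 - s := by linarith
  have hθ2 : 2 < θ := by
    have : θ - 2 = 2 * i₀ * s / (1 - s) := by rw [hθ]; field_simp; ring
    have : 0 < 2 * i₀ * s / (1 - s) := by positivity
    linarith
  obtain ⟨hφ0, hφ1, hφroot⟩ := smaller_root_mem_Ioo hθ2 hφ₂
  have hroot := barrier_condition_of_root h1s.ne' hθ hφroot
  have hsum := summable_PC (p := 1 / 2) (i₀ := i₀) (by norm_num) (by norm_num) hs.le hs1
  have hW := cC_mul_occupation_eq_barrierProfile hs hs1 hi₀' hφ0.le hφ1.le hroot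
  have h2φ : 2 - φ₂ ≠ 0 := by linarith
  refine ⟨fun k => hsum _, ?_, fun k hk => ?_⟩
  · change occupation (1 / 2) s i₀ 0 = _
    have h1 := hW 1
    rw [cC_one, one_mul, barrierProfile_one hi₀'] at h1
    rw [occupation_zero hi₀'.ne' hsum, h1]
    field_simp
    norm_num
  · obtain ⟨l, rfl⟩ : ∃ l, k = l + 2 := ⟨k - 2, by omega⟩
    change s * occupation (1 / 2) s i₀ _ = _
    have hk := hW ((l + 1 + 1) * i₀)
    rw [cC_mul_self (by omega) hi₀'.ne', barrierProfile_succ_mul hi₀'] at hk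
    have hu : occupation (1 / 2) s i₀ ((l + 2) * i₀) =
        2 * i₀ * φ₂ ^ (l + 1) / (2 - φ₂) / (1 - s) := by
      rw [eq_div_iff h1s.ne', mul_comm]; exact hk
    rw [hu, show l + 2 - 1 = l + 1 by omega]
    field_simp
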